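/- Let m ≥ 1 and N = 2m. For x ∈ ℝ^N, define w ∈ ℝ^N by w_n = x_{2n} and w_{N−1−n} = −x_{2n+1} for 0 ≤ n < m (the even–odd separation with the odd indices reversed and negated). Then for every 0 ≤ k < N, the DST coefficient satisfies Σ_{n=0}^{N−1} x_n · sin(π·(n+1/2)·(k+1)/N) = Re( i · exp(−iπ(k+1)/(2N)) · Σ_{n=0}^{N−1} w_n · exp(−2πi·n·(k+1)/N) ). -/

import Mathlib

/-!
Reindex the DFT of `w` by the permutation `σ : 2j ↦ j, 2j+1 ↦ N-1-j`, so that `w (σ n) = ±x n`.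
Multiplied by the twiddle factor `i·exp(-iπ(k+1)/(2N))`, the kernel at `σ n` has real part
`±sin(π(n+1/2)(k+1)/N)`: for even `n` directly, and for odd `n` because the phase at `N-1-j` is,
modulo `2π(k+1)`, minus the phase at `2j+1`. The two signs cancel term by term.
-/

open Complex

def evenOddReorder (N : ℕ) (n : Fin N) : Fin N :=
  ⟨if (n : ℕ) % 2 = 0 then n / 2 else N - 1 - n / 2, by split_ifs <;> omega⟩

section evenOddReorder

variable {N : ℕ} {n : Fin N} {j : ℕ}

lemma evenOddReorder_val_of_eq_two_mul (h : (n : ℕ) = 2 * j) :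
    (evenOddReorder N n : ℕ) = j := by
  simp [evenOddReorder, h]

lemma evenOddReorder_val_of_eq_two_mul_add_one (h : (n : ℕ) = 2 * j + 1) :
    (evenOddReorder N n : ℕ) = N - 1 - j := by
  simp only [evenOddReorder, h]
  rw [if_neg (by omega)]
  omega

lemma evenOddReorder_bijective (N : ℕ) : (evenOddReorder N).Bijective := by
  refine Finite.injective_iff_bijective.mp fun n n' h => Fin.ext ?_
  have h' := congrArg Fin.val h
  simp only [evenOddReorder] at h'
  have := n.isLt
  have := n'.isLt
  split_ifs at h' <;> omega

end evenOddReorder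

lemma re_I_mul_exp_ofReal_mul_I (r : ℝ) : (I * exp (r * I)).re = -Real.sin r := by
  simp [mul_re, exp_ofReal_mul_I_re, exp_ofReal_mul_I_im]

lemma re_dstTwiddle_mul_dftKernel (N k : ℕ) (t : ℝ) :
    (I * exp (-I * Real.pi * (k + 1) / (2 * N)) *
      exp (-2 * Real.pi * I * t * (k + 1) / N)).re =
      Real.sin (Real.pi * (2 * t + 1 / 2) * (k + 1) / N) := by
  have hphase : -I * Real.pi * (k + 1) / (2 * N) + -2 * Real.pi * I * t * (k + 1) / N =
      ↑(-(Real.pi * (2 * t + 1 / 2) * (k + 1) / N)) * I := by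
    push_cast
    ring
  rw [mul_assoc, ← exp_add, hphase, re_I_mul_exp_ofReal_mul_I, Real.sin_neg, neg_neg]

lemma re_dstTwiddle_mul_dftKernel_evenOddReorder (N k : ℕ) (n : Fin N) :
    (I * exp (-I * Real.pi * (k + 1) / (2 * N)) *
      exp (-2 * Real.pi * I * (evenOddReorder N n : ℕ) * (k + 1) / N)).re =
      (-1) ^ (n : ℕ) * Real.sin (Real.pi * ((n : ℕ) + 1 / 2) * (k + 1) / N) := by
  obtain ⟨j, hj | hj⟩ := Nat.even_or_odd' n
  · rw [evenOddReorder_val_of_eq_two_mul hj, ← ofReal_natCast j, re_dstTwiddle_mul_dftKernel, hj]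
    simp
  · have hN : (N : ℝ) ≠ 0 := Nat.cast_ne_zero.mpr (Fin.pos n).ne'
    have hjN : j + 1 ≤ N := by omega
    have hreflect : Real.pi * (2 * ((N - 1 - j : ℕ) : ℝ) + 1 / 2) * (k + 1) / N =
        (k + 1 : ℕ) * (2 * Real.pi) - Real.pi * ((2 * j + 1 : ℕ) + 1 / 2) * (k + 1) / N := by
      rw [Nat.sub_sub, Nat.cast_sub (by omega)]
      push_cast
      field_simp
      ring
    rw [evenOddReorder_val_of_eq_two_mul_add_one hj, ← ofReal_natCast (N - 1 - j),
      re_dstTwiddle_mul_dftKernel, hreflect, Real.sin_nat_mul_two_pi_sub, hj, pow_succ, pow_mul]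
    simp

/-- **The DST as the real part of a rescaled DFT of a permuted, partially negated vector.**
Let `N = 2m` and let `w` be obtained from `x ∈ ℝ^N` by even–odd separation with the odd
indices reversed and negated: `w_n = x_{2n}` and `w_{N−1−n} = −x_{2n+1}` for `0 ≤ n < m`.
Then for every `0 ≤ k < N`,
`Σ_n x_n sin(π(n+1/2)(k+1)/N) = Re( i·exp(−iπ(k+1)/(2N)) · Σ_n w_n exp(−2πi·n·(k+1)/N) )`. -/
theorem dst_eq_re_scaled_dft (m : ℕ) (N : ℕ) (hN : N = 2 * m)
    (x w : Fin N → ℝ)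
    (hw : ∀ n : Fin m,
      w ⟨(n : ℕ), by have := n.isLt; omega⟩ = x ⟨2 * (n : ℕ), by have := n.isLt; omega⟩ ∧
      w ⟨N - 1 - (n : ℕ), by have := n.isLt; omega⟩ =
        -x ⟨2 * (n : ℕ) + 1, by have := n.isLt; omega⟩)
    (k : ℕ) :
    ∑ n : Fin N, x n * Real.sin (Real.pi * ((n : ℕ) + 1 / 2) * (k + 1) / N) =
      (Complex.I * Complex.exp (-Complex.I * Real.pi * (k + 1) / (2 * N)) *
        ∑ n : Fin N, (w n : ℂ) *
          Complex.exp (-2 * Real.pi * Complex.I * (n : ℕ) * (k + 1) / N)).re := by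
  have hw_reorder : ∀ n, w (evenOddReorder N n) = (-1) ^ (n : ℕ) * x n := by
    rintro ⟨n, hn⟩
    obtain ⟨j, rfl | rfl⟩ := Nat.even_or_odd' n
    · have hσ : evenOddReorder N ⟨2 * j, hn⟩ = ⟨j, by omega⟩ :=
        Fin.ext (evenOddReorder_val_of_eq_two_mul rfl)
      rw [hσ, (hw ⟨j, by omega⟩).1, pow_mul]
      norm_num
    · have hσ : evenOddReorder N ⟨2 * j + 1, hn⟩ = ⟨N - 1 - j, by omega⟩ :=
        Fin.ext (evenOddReorder_val_of_eq_two_mul_add_one rfl)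
      rw [hσ, (hw ⟨j, by omega⟩).2, pow_succ, pow_mul]
      norm_num
  symm
  rw [Finset.mul_sum, re_sum, ← (evenOddReorder_bijective N).sum_comp]
  refine Finset.sum_congr rfl fun n _ => ?_
  rw [mul_left_comm, re_ofReal_mul, re_dstTwiddle_mul_dftKernel_evenOddReorder, hw_reorder,
    ← mul_assoc, mul_right_comm _ (x n), ← mul_pow]
  norm_num
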